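/- arXiv:2604.18492 — 4 statements merged into one kernel-verified Lean document; each statement's English description precedes it below -/
import Mathlib

section
/- The extended log-barrier function ψ_r is convex on ℝ for every r > 0. -/
open Set

lemma extended_log_barrier_hasDerivAt (r : ℝ) (hr : 0 < r) (z : ℝ) :
    HasDerivAt (fun z : ℝ => if z ≤ -1/r^2 then -(1/r) * Real.log (-z)
        else r * z - (1/r) * Real.log (1/r^2) + 1/r)
      (if z ≤ -1/r^2 then -1/(r*z) else r) z := by
  have hr2 : (0:ℝ) < r^2 := by positivity
  have hz₀neg : (-1/r^2 : ℝ) < 0 := div_neg_of_neg_of_pos (by norm_num) hr2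
  have hgd : ∀ w : ℝ, w < 0 →
      HasDerivAt (fun z : ℝ => -(1/r) * Real.log (-z)) (-1/(r*w)) w := by
    intro w hw
    have h1 : HasDerivAt (fun z : ℝ => -z) (-1) w := (hasDerivAt_id w).neg
    have h2 : HasDerivAt (fun z : ℝ => Real.log (-z)) ((-w)⁻¹ * (-1)) w :=
      (Real.hasDerivAt_log (by linarith : -w ≠ 0)).comp w h1
    have h3 := h2.const_mul (-(1/r))
    have e : -1/(r*w) = -(1/r) * ((-w)⁻¹ * -1) := by
      rw [div_eq_mul_inv, mul_inv, inv_neg]; ring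
    rw [e]; exact h3
  have hhd : ∀ w : ℝ,
      HasDerivAt (fun z : ℝ => r * z - (1/r) * Real.log (1/r^2) + 1/r) r w := by
    intro w
    have h1 : HasDerivAt (fun z : ℝ => r * z) r w := by
      simpa using (hasDerivAt_id w).const_mul r
    exact (h1.sub_const ((1/r) * Real.log (1/r^2))).add_const (1/r)
  have hval : -(1/r) * Real.log (-(-1/r^2)) =
      r * (-1/r^2) - (1/r) * Real.log (1/r^2) + 1/r := by
    have : -(-1/r^2 : ℝ) = 1/r^2 := by ring
    rw [this]
    field_simp
    ring
  have hderval : -1/(r*(-1/r^2)) = r := by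
    field_simp
  rcases lt_trichotomy z (-1/r^2) with hlt | heq | hgt
  · rw [if_pos hlt.le]
    apply (hgd z (by linarith)).congr_of_eventuallyEq
    filter_upwards [Iio_mem_nhds hlt] with y hy
    rw [if_pos (le_of_lt hy)]
  · subst heq
    rw [if_pos le_rfl, hderval]
    have hleft : HasDerivWithinAt (fun z : ℝ => if z ≤ -1/r^2 then -(1/r) * Real.log (-z)
        else r * z - (1/r) * Real.log (1/r^2) + 1/r) r (Iic (-1/r^2)) (-1/r^2) := by
      have := ((hgd (-1/r^2) hz₀neg).hasDerivWithinAt (s := Iic (-1/r^2)))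
      rw [hderval] at this
      apply this.congr
      · intro y hy; rw [if_pos (mem_Iic.mp hy)]
      · rw [if_pos le_rfl]
    have hright : HasDerivWithinAt (fun z : ℝ => if z ≤ -1/r^2 then -(1/r) * Real.log (-z)
        else r * z - (1/r) * Real.log (1/r^2) + 1/r) r (Ici (-1/r^2)) (-1/r^2) := by
      have := ((hhd (-1/r^2)).hasDerivWithinAt (s := Ici (-1/r^2)))
      apply this.congr
      · intro y hy
        rcases eq_or_lt_of_le (mem_Ici.mp hy) with rfl | hy'
        · rw [if_pos le_rfl, hval]
        · rw [if_neg (not_le.mpr hy')]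
      · rw [if_pos le_rfl, hval]
    have := hleft.union hright
    rwa [Iic_union_Ici, hasDerivWithinAt_univ] at this
  · rw [if_neg (not_le.mpr hgt)]
    apply (hhd z).congr_of_eventuallyEq
    filter_upwards [Ioi_mem_nhds hgt] with y hy
    rw [if_neg (not_le.mpr hy)]

/-- The extended log-barrier function `ψ_r` is convex on `ℝ` for every `r > 0`. -/
theorem extended_log_barrier_convexOn (r : ℝ) (hr : 0 < r) :
    ConvexOn ℝ Set.univ
      (fun z : ℝ => if z ≤ -1/r^2 then -(1/r) * Real.log (-z)
        else r * z - (1/r) * Real.log (1/r^2) + 1/r) := by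
  have hr2 : (0:ℝ) < r^2 := by positivity
  have hz₀neg : (-1/r^2 : ℝ) < 0 := div_neg_of_neg_of_pos (by norm_num) hr2
  have hdiff : Differentiable ℝ (fun z : ℝ => if z ≤ -1/r^2 then -(1/r) * Real.log (-z)
        else r * z - (1/r) * Real.log (1/r^2) + 1/r) :=
    fun z => (extended_log_barrier_hasDerivAt r hr z).differentiableAt
  apply Monotone.convexOn_univ_of_deriv hdiff
  have hderiv : deriv (fun z : ℝ => if z ≤ -1/r^2 then -(1/r) * Real.log (-z)
        else r * z - (1/r) * Real.log (1/r^2) + 1/r)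
      = fun z : ℝ => if z ≤ -1/r^2 then -1/(r*z) else r :=
    funext fun z => (extended_log_barrier_hasDerivAt r hr z).deriv
  rw [hderiv]
  intro x y hxy
  dsimp only
  by_cases hx : x ≤ -1/r^2 <;> by_cases hy : y ≤ -1/r^2
  · rw [if_pos hx, if_pos hy]
    have hx0 : x < 0 := lt_of_le_of_lt hx hz₀neg
    have hy0 : y < 0 := lt_of_le_of_lt hy hz₀neg
    have e1 : -1/(r*x) = 1/(-(r*x)) := by ring
    have e2 : -1/(r*y) = 1/(-(r*y)) := by ring
    rw [e1, e2, one_div_le_one_div (by nlinarith : (0:ℝ) < -(r*x)) (by nlinarith : (0:ℝ) < -(r*y))]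
    nlinarith
  · rw [if_pos hx, if_neg hy]
    have hx0 : x < 0 := lt_of_le_of_lt hx hz₀neg
    have h1 : r^2 * x ≤ -1 := by
      have h2 := mul_le_mul_of_nonneg_left hx hr2.le
      have e : r^2 * (-1/r^2) = -1 := by field_simp
      linarith [h2.trans_eq e]
    rw [div_le_iff_of_neg (by nlinarith : r*x < 0)]
    nlinarith
  · exact absurd (hxy.trans hy) hx
  · rw [if_neg hx, if_neg hy]
end

section
/- Let g₁, g₂ ∈ ℝⁿ with g₁ ≠ g₂, and let a* be the clipping of a₀ = ⟪g₂ - g₁, g₂⟫ / ‖g₁ - g₂‖² to the interval [0,1], i.e., a* = max(min(a₀, 1), 0). Then a* minimizes a ↦ ‖a·g₁ + (1-a)·g₂‖² over [0,1]. -/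
open RealInnerProductSpace

/-- Clipping the unconstrained minimizer `a₀` to `[0,1]` minimizes
`a ↦ ‖a•g₁ + (1-a)•g₂‖²` over `[0,1]`. -/
theorem minnorm_clipped_minimizer {E : Type*} [NormedAddCommGroup E]
    [InnerProductSpace ℝ E] (g₁ g₂ : E) (h : g₁ ≠ g₂) :
    ∀ a ∈ Set.Icc (0 : ℝ) 1,
      ‖(max (min (⟪g₂ - g₁, g₂⟫ / ‖g₁ - g₂‖^2) 1) 0) • g₁
          + (1 - max (min (⟪g₂ - g₁, g₂⟫ / ‖g₁ - g₂‖^2) 1) 0) • g₂‖^2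
        ≤ ‖a • g₁ + (1 - a) • g₂‖^2 := by
  have hne : g₁ - g₂ ≠ 0 := sub_ne_zero.mpr h
  have hc : (0:ℝ) < ‖g₁ - g₂‖^2 := pow_pos (norm_pos_iff.mpr hne) 2
  set c := ‖g₁ - g₂‖^2 with hcdef
  set b := ⟪g₂ - g₁, g₂⟫ with hbdef
  have key : ∀ a : ℝ, ‖a • g₁ + (1 - a) • g₂‖^2 = c * a^2 - 2 * b * a + ‖g₂‖^2 := by
    intro a
    have h1 : a • g₁ + (1 - a) • g₂ = g₂ + a • (g₁ - g₂) := by module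
    have hb2 : ⟪g₂, g₁ - g₂⟫ = -b := by
      rw [hbdef, inner_sub_left, inner_sub_right, real_inner_comm g₂ g₁]; ring
    rw [h1, norm_add_sq_real, inner_smul_right, norm_smul, Real.norm_eq_abs, mul_pow,
      sq_abs, hb2]
    ring
  intro a ha
  obtain ⟨ha0, ha1⟩ := ha
  set t := max (min (b / c) 1) 0 with htdef
  rw [key, key]
  rcases le_or_gt (b / c) 0 with h0 | h0
  · have ht : t = 0 := by
      rw [htdef]; rw [max_eq_right (min_le_of_left_le h0)]
    have hb : b ≤ 0 := by
      rcases div_nonpos_iff.mp h0 with ⟨h1, h2⟩ | ⟨h1, h2⟩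
      · linarith
      · exact h1
    rw [ht]
    nlinarith [mul_nonneg hc.le (sq_nonneg a), mul_nonneg ha0 (neg_nonneg.mpr hb)]
  rcases le_or_gt 1 (b / c) with h1 | h1
  · have ht : t = 1 := by
      rw [htdef, min_eq_right h1, max_eq_left zero_le_one]
    have hb : c ≤ b := by
      have := (one_le_div hc).mp h1
      linarith
    rw [ht]
    nlinarith [mul_nonneg (by linarith : (0:ℝ) ≤ 1 - a)
      (by nlinarith [mul_nonneg hc.le (by linarith : (0:ℝ) ≤ 1 - a)] : (0:ℝ) ≤ 2*b - c*(a+1))]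
  · have ht : t = b / c := by
      rw [htdef, min_eq_left h1.le, max_eq_left h0.le]
    rw [ht]
    have e1 : c*(b/c)^2 - 2*b*(b/c) + ‖g₂‖^2 = ‖g₂‖^2 - b^2/c := by
      field_simp; ring
    have e2 : c*a^2 - 2*b*a + ‖g₂‖^2 = c*(a - b/c)^2 + (‖g₂‖^2 - b^2/c) := by
      field_simp; ring
    rw [e1, e2]
    nlinarith [mul_nonneg hc.le (sq_nonneg (a - b/c))]
end

section
/- Let g₁, g₂ be vectors in a real inner product space and let a* ∈ [0,1] be a minimizer of f(a) = ‖a·g₁ + (1-a)·g₂‖² over [0,1]. Set g = a*·g₁ + (1-a*)·g₂. Then ⟪g₁, g⟫ ≥ ‖g‖² and ⟪g₂, g⟫ ≥ ‖g‖². In particular, if g ≠ 0 then ⟪g₁, -g⟫ < 0 and ⟪g₂, -g⟫ < 0, so -g is a common descent direction for both gradients. -/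
open RealInnerProductSpace

/-- If `a* ∈ [0,1]` minimizes `a ↦ ‖a•g₁+(1-a)•g₂‖²` over `[0,1]` and
`g = a*•g₁+(1-a*)•g₂`, then `⟪g₁,g⟫ ≥ ‖g‖²` and `⟪g₂,g⟫ ≥ ‖g‖²`; in particular if
`g ≠ 0` then `-g` is a common descent direction. -/
theorem minnorm_common_descent {E : Type*} [NormedAddCommGroup E]
    [InnerProductSpace ℝ E] (g₁ g₂ : E) (a : ℝ) (ha : a ∈ Set.Icc (0 : ℝ) 1)
    (hmin : ∀ b ∈ Set.Icc (0 : ℝ) 1,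
      ‖a • g₁ + (1 - a) • g₂‖^2 ≤ ‖b • g₁ + (1 - b) • g₂‖^2) :
    ⟪g₁, a • g₁ + (1 - a) • g₂⟫ ≥ ‖a • g₁ + (1 - a) • g₂‖^2 ∧
    ⟪g₂, a • g₁ + (1 - a) • g₂⟫ ≥ ‖a • g₁ + (1 - a) • g₂‖^2 ∧
    (a • g₁ + (1 - a) • g₂ ≠ 0 →
      ⟪g₁, -(a • g₁ + (1 - a) • g₂)⟫ < 0 ∧ ⟪g₂, -(a • g₁ + (1 - a) • g₂)⟫ < 0) := by
  obtain ⟨ha0, ha1⟩ := ha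
  set g : E := a • g₁ + (1 - a) • g₂ with hg
  set d : E := g₁ - g₂ with hd
  set c : ℝ := ⟪g, d⟫ with hc
  set D : ℝ := ‖d‖ ^ 2 with hD
  have hDnn : 0 ≤ D := sq_nonneg _
  have expand : ∀ b : ℝ, ‖b • g₁ + (1 - b) • g₂‖ ^ 2
      = ‖g‖ ^ 2 + 2 * (b - a) * c + (b - a) ^ 2 * D := by
    intro b
    have h1 : b • g₁ + (1 - b) • g₂ = g + (b - a) • d := by
      rw [hg, hd]; module
    rw [h1, norm_add_sq_real, real_inner_smul_right, norm_smul, mul_pow, Real.norm_eq_abs, sq_abs]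
    ring
  have key : ∀ t : ℝ, 0 ≤ a + t → a + t ≤ 1 → 0 ≤ 2 * t * c + t ^ 2 * D := by
    intro t h0 h1
    have := hmin (a + t) ⟨h0, h1⟩
    rw [expand (a + t)] at this
    nlinarith [this]
  -- c ≥ 0 when a < 1
  have h1 : a < 1 → 0 ≤ c := by
    intro halt
    by_contra hcneg
    push_neg at hcneg
    rcases eq_or_lt_of_le hDnn with hD0 | hDpos
    · have := key (1 - a) (by linarith) (by linarith)
      nlinarith
    · set t : ℝ := min (1 - a) (-c / D) with ht
      have ht1 : t ≤ 1 - a := min_le_left _ _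
      have ht2 : t ≤ -c / D := min_le_right _ _
      have htpos : 0 < t := lt_min (by linarith) (div_pos (by linarith) hDpos)
      have := key t (by linarith) (by linarith)
      have htD : t * D ≤ -c := (le_div_iff₀ hDpos).mp ht2
      nlinarith
  have h2 : 0 < a → c ≤ 0 := by
    intro hapos
    by_contra hcpos
    push_neg at hcpos
    rcases eq_or_lt_of_le hDnn with hD0 | hDpos
    · have := key (-a) (by linarith) (by linarith)
      nlinarith
    · set t : ℝ := min a (c / D) with ht
      have ht1 : t ≤ a := min_le_left _ _
      have ht2 : t ≤ c / D := min_le_right _ _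
      have htpos : 0 < t := lt_min hapos (div_pos hcpos hDpos)
      have := key (-t) (by linarith) (by linarith)
      have htD : t * D ≤ c := (le_div_iff₀ hDpos).mp ht2
      nlinarith
  -- the two main inequalities
  have e1 : ⟪g₁, g⟫ = ‖g‖ ^ 2 + (1 - a) * c := by
    have hge : g₁ = g + (1 - a) • d := by rw [hg, hd]; module
    rw [hge, inner_add_left, real_inner_smul_left, real_inner_self_eq_norm_sq,
      real_inner_comm]
    try ring
  have e2 : ⟪g₂, g⟫ = ‖g‖ ^ 2 + (-a) * c := by
    have hge : g₂ = g + (-a) • d := by rw [hg, hd]; module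
    rw [hge, inner_add_left, real_inner_smul_left, real_inner_self_eq_norm_sq,
      real_inner_comm]
    try ring
  have hc1 : 0 ≤ (1 - a) * c := by
    rcases eq_or_lt_of_le ha1 with h | h
    · simp [← h]
    · exact mul_nonneg (by linarith) (h1 h)
  have hc2 : 0 ≤ (-a) * c := by
    rcases eq_or_lt_of_le ha0 with h | h
    · simp [← h]
    · have := h2 h; nlinarith
  refine ⟨by rw [e1]; linarith, by rw [e2]; linarith, fun hgne => ?_⟩
  have hgpos : 0 < ‖g‖ ^ 2 := pow_pos (norm_pos_iff.mpr hgne) 2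
  constructor
  · rw [inner_neg_right, e1]; linarith
  · rw [inner_neg_right, e2]; linarith
end

section
/- Common descent from the minimum-norm element (MGDA, general m): let g₁, …, g_m lie in a real inner product space, let C be their convex hull, and let g ∈ C satisfy ‖g‖ ≤ ‖u‖ for all u ∈ C. Then ⟪g_i, g⟫ ≥ ‖g‖² for every i ∈ {1,…,m}. Consequently, if g ≠ 0, then ⟪g_i, -g⟫ ≤ -‖g‖² < 0 for all i. -/
open RealInnerProductSpace

/-- Common descent from the minimum-norm element (MGDA, general `m`): if `g` is a
minimum-norm element of the convex hull of `g₁,…,g_m`, then `⟪gᵢ, g⟫ ≥ ‖g‖²` for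
every `i`; consequently if `g ≠ 0`, then `⟪gᵢ, -g⟫ ≤ -‖g‖² < 0` for all `i`. -/
theorem mgda_common_descent {E : Type*} [NormedAddCommGroup E]
    [InnerProductSpace ℝ E] {m : ℕ} (G : Fin m → E) (g : E)
    (hg : ∃ γ : Fin m → ℝ, (∀ i, 0 ≤ γ i) ∧ (∑ i, γ i) = 1 ∧ g = ∑ i, γ i • G i)
    (hmin : ∀ u : E,
      (∃ γ : Fin m → ℝ, (∀ i, 0 ≤ γ i) ∧ (∑ i, γ i) = 1 ∧ u = ∑ i, γ i • G i) →
      ‖g‖ ≤ ‖u‖) :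
    (∀ i, ⟪G i, g⟫ ≥ ‖g‖^2) ∧
    (g ≠ 0 → ∀ i, ⟪G i, -g⟫ ≤ -‖g‖^2 ∧ -‖g‖^2 < 0) := by
  obtain ⟨γ, hγ0, hγ1, hγg⟩ := hg
  have key : ∀ i, ⟪G i, g⟫ ≥ ‖g‖^2 := by
    intro i
    -- for each t ∈ (0,1], (1-t)•g + t•G i ∈ C
    have hmem : ∀ t : ℝ, 0 ≤ t → t ≤ 1 →
        ‖g‖ ≤ ‖(1 - t) • g + t • G i‖ := by
      intro t ht0 ht1
      apply hmin
      refine ⟨fun j => (1 - t) * γ j + (if j = i then t else 0), ?_, ?_, ?_⟩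
      · intro j
        have : 0 ≤ (1 - t) * γ j := mul_nonneg (by linarith) (hγ0 j)
        dsimp only
        split_ifs <;> linarith
      · rw [Finset.sum_add_distrib, ← Finset.mul_sum, hγ1,
          Finset.sum_ite_eq' Finset.univ i (fun _ => t)]
        simp
      · rw [Finset.sum_congr rfl (fun j _ => add_smul _ _ (G j)),
          Finset.sum_add_distrib]
        congr 1
        · rw [hγg, Finset.smul_sum]
          exact Finset.sum_congr rfl fun j _ => (mul_smul _ _ _).symm
        · rw [show (∑ j, (if j = i then t else 0) • G j) =
              ∑ j, (if j = i then t • G i else 0) from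
              Finset.sum_congr rfl fun j _ => by split_ifs with h <;> simp [h],
            Finset.sum_ite_eq' Finset.univ i (fun _ => t • G i)]
          simp
    -- deduce 0 ≤ ⟪g, G i - g⟫
    have hquad : ∀ t : ℝ, 0 < t → t ≤ 1 → 0 ≤ 2 * ⟪g, G i - g⟫ + t * ‖G i - g‖^2 := by
      intro t ht0 ht1
      have h := hmem t (le_of_lt ht0) ht1
      have hrw : (1 - t) • g + t • G i = g + t • (G i - g) := by
        rw [smul_sub, sub_smul, one_smul]; abel
      have hsq : ‖g‖^2 ≤ ‖g + t • (G i - g)‖^2 := by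
        rw [hrw] at h
        exact pow_le_pow_left₀ (norm_nonneg _) h 2
      rw [norm_add_sq_real, norm_smul, real_inner_smul_right, mul_pow,
        Real.norm_eq_abs, abs_of_pos ht0] at hsq
      nlinarith [sq_nonneg t]
    have hnn : 0 ≤ ⟪g, G i - g⟫ := by
      by_contra h
      push_neg at h
      set a := ⟪g, G i - g⟫
      set b := ‖G i - g‖^2 with hb
      have hbnn : 0 ≤ b := sq_nonneg _
      rcases eq_or_lt_of_le hbnn with hb0 | hb0
      · have := hquad 1 one_pos le_rfl
        rw [← hb0] at this; linarith
      · set t := min 1 (-a / b) with htdef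
        have htpos : 0 < t := lt_min one_pos (div_pos (by linarith) hb0)
        have ht1 : t ≤ 1 := min_le_left _ _
        have := hquad t htpos ht1
        have htle : t ≤ -a / b := min_le_right _ _
        have : t * b ≤ -a := by
          rw [div_eq_mul_inv] at htle
          calc t * b ≤ (-a * b⁻¹) * b := by nlinarith
            _ = -a := by field_simp
        linarith [hquad t htpos ht1]
    have : ⟪g, G i⟫ - ⟪g, g⟫ = ⟪g, G i - g⟫ := (inner_sub_right _ _ _).symm
    have hc := real_inner_comm g (G i)
    rw [ge_iff_le, ← real_inner_self_eq_norm_sq]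
    linarith
  refine ⟨key, fun hgne i => ?_⟩
  have h0 : (0:ℝ) < ‖g‖^2 := pow_pos (norm_pos_iff.mpr hgne) 2
  constructor
  · rw [inner_neg_right]
    linarith [key i]
  · linarith
end
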